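/- arXiv:2410.24058 — 4 statements merged into one kernel-verified Lean document; each statement's English description precedes it below -/
import Mathlib

section
/- For any positive definite real (or complex Hermitian) matrix σ and any Hermitian matrices A and B of the same size, the integral ∫₀^∞ Tr[A (σ + sI)^{-1} B (σ + sI)^{-1}] ds, expressed in an eigenbasis of σ with eigenvalues λ_k, equals ∑_{k,ℓ} c(λ_k, λ_ℓ) ⟨k|A|ℓ⟩⟨ℓ|B|k⟩, where c(x, x) = 1/x and c(x, y) = (ln x − ln y)/(x − y) for x ≠ y. -/
/-!
Diagonalising `σ = ∑ λ_k |k⟩⟨k|` turns the resolvent into `(σ + s)⁻¹ = ∑ (λ_k + s)⁻¹ |k⟩⟨k|`,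
so the integrand is `∑_{k,ℓ} (λ_k + s)⁻¹ (λ_ℓ + s)⁻¹ ⟨k|A|ℓ⟩⟨ℓ|B|k⟩`. Each scalar integrand
`(x + s)⁻¹ (y + s)⁻¹` has the primitive `-c(x + s, y + s)`, which tends to `0` at infinity,
so its integral over `(0, ∞)` is `c(x, y)`.
-/

open MeasureTheory Matrix
open scoped ComplexOrder

/-- The inverse logarithmic mean kernel. -/
noncomputable def cKM (x y : ℝ) : ℝ :=
  if x = y then 1 / x else (Real.log x - Real.log y) / (x - y)

open Filter Set Topology

lemma cKM_add_const_of_ne {x y : ℝ} (h : x ≠ y) (s : ℝ) :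
    cKM (x + s) (y + s) = (Real.log (x + s) - Real.log (y + s)) / (x - y) := by
  rw [cKM, if_neg (by simpa using h), add_sub_add_right_eq_sub]

lemma hasDerivAt_cKM_add_const {x y s : ℝ} (hx : 0 < x + s) (hy : 0 < y + s) :
    HasDerivAt (fun t => cKM (x + t) (y + t)) (-((x + s)⁻¹ * (y + s)⁻¹)) s := by
  by_cases hxy : x = y
  · subst hxy
    simp only [cKM, if_true, one_div]
    refine (((hasDerivAt_id' s).const_add x).fun_inv hx.ne').congr_deriv ?_
    field_simp
  · simp only [cKM_add_const_of_ne hxy]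
    refine (((((hasDerivAt_id' s).const_add x).log hx.ne').fun_sub
      (((hasDerivAt_id' s).const_add y).log hy.ne')).div_const (x - y)).congr_deriv ?_
    have : x - y ≠ 0 := sub_ne_zero.mpr hxy
    field_simp
    ring

lemma tendsto_cKM_add_const_atTop (x y : ℝ) :
    Tendsto (fun s => cKM (x + s) (y + s)) atTop (𝓝 0) := by
  by_cases hxy : x = y
  · subst hxy
    simp only [cKM, if_true, one_div]
    exact (tendsto_atTop_add_const_left _ x tendsto_id).inv_tendsto_atTop
  · simp only [cKM_add_const_of_ne hxy]
    have hlog : Tendsto (fun s => Real.log (x + s) - Real.log (y + s)) atTop (𝓝 0) := by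
      simpa [add_comm] using (Real.tendsto_log_comp_add_sub_log x).sub
        (Real.tendsto_log_comp_add_sub_log y)
    simpa using hlog.div_const (x - y)

lemma integrableOn_and_integral_inv_add_mul_inv_add {x y : ℝ} (hx : 0 < x) (hy : 0 < y) :
    IntegrableOn (fun s => (x + s)⁻¹ * (y + s)⁻¹) (Ioi 0) ∧
      ∫ s in Ioi (0 : ℝ), (x + s)⁻¹ * (y + s)⁻¹ = cKM x y := by
  have hderiv : ∀ s ∈ Ici (0 : ℝ),
      HasDerivAt (fun t => -cKM (x + t) (y + t)) ((x + s)⁻¹ * (y + s)⁻¹) s := fun s hs => by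
    have hs : 0 ≤ s := hs
    simpa using (hasDerivAt_cKM_add_const (by linarith : 0 < x + s)
      (by linarith : 0 < y + s)).fun_neg
  have hderiv' s (hs : s ∈ Ioi (0 : ℝ)) := hderiv s (Ioi_subset_Ici_self hs)
  have hcont := (hderiv 0 self_mem_Ici).continuousAt.continuousWithinAt (s := Ici 0)
  have hpos : ∀ s ∈ Ioi (0 : ℝ), 0 ≤ (x + s)⁻¹ * (y + s)⁻¹ := fun s hs => by
    have : 0 < s := hs; positivity
  have hlim := (tendsto_cKM_add_const_atTop x y).neg
  rw [neg_zero] at hlim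
  refine ⟨integrableOn_Ioi_deriv_of_nonneg hcont hderiv' hpos hlim, ?_⟩
  rw [integral_Ioi_of_hasDerivAt_of_nonneg hcont hderiv' hpos hlim]
  simp only [add_zero, zero_sub, neg_neg]

lemma integrableOn_and_integral_complex_inv_add_mul_inv_add {x y : ℝ} (hx : 0 < x) (hy : 0 < y) :
    IntegrableOn (fun s : ℝ => ((x : ℂ) + s)⁻¹ * ((y : ℂ) + s)⁻¹) (Ioi 0) ∧
      ∫ s in Ioi (0 : ℝ), ((x : ℂ) + s)⁻¹ * ((y : ℂ) + s)⁻¹ = cKM x y := by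
  have hcast : (fun s : ℝ => ((x : ℂ) + s)⁻¹ * ((y : ℂ) + s)⁻¹) =
      fun s => (((x + s)⁻¹ * (y + s)⁻¹ : ℝ) : ℂ) := by
    ext s; push_cast; rfl
  obtain ⟨hint, hval⟩ := integrableOn_and_integral_inv_add_mul_inv_add hx hy
  rw [hcast]
  exact ⟨hint.ofReal, by rw [← hval]; exact integral_ofReal⟩

namespace Matrix

variable {ι R : Type*} [Fintype ι]

-- `(of u)ᵀ` is the matrix whose `k`-th column is the vector `u k`.

lemma conjTranspose_mul_mul_transpose_of_apply [CommSemiring R] [StarRing R]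
    (M : Matrix ι ι R) (u : ι → ι → R) (k ℓ : ι) :
    ((of u)ᵀᴴ * M * (of u)ᵀ) k ℓ = star (u k) ⬝ᵥ M *ᵥ u ℓ := by
  simp only [mul_apply, conjTranspose_apply, transpose_apply, of_apply, dotProduct, mulVec,
    Pi.star_apply, Finset.sum_mul, Finset.mul_sum, mul_assoc]
  exact Finset.sum_comm

lemma conjTranspose_mul_transpose_of_eq_one [DecidableEq ι] [CommSemiring R] [StarRing R]
    {u : ι → ι → R} (horth : ∀ k ℓ, star (u k) ⬝ᵥ u ℓ = if k = ℓ then 1 else 0) :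
    (of u)ᵀᴴ * (of u)ᵀ = 1 := by
  ext k ℓ
  have h := conjTranspose_mul_mul_transpose_of_apply 1 u k ℓ
  rwa [Matrix.mul_one, one_mulVec, horth, ← one_apply] at h

lemma mul_transpose_of_eq_mul_diagonal [DecidableEq ι] [CommSemiring R] {M : Matrix ι ι R}
    {u : ι → ι → R} {μ : ι → R} (heig : ∀ k, M *ᵥ u k = μ k • u k) :
    M * (of u)ᵀ = (of u)ᵀ * diagonal μ := by
  ext i k
  rw [mul_diagonal]
  simpa [mul_comm, mulVec, dotProduct, mul_apply] using congrFun (heig k) i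

lemma inv_eq_mul_diagonal_inv_mul_conjTranspose [DecidableEq ι] [Field R] [StarRing R]
    {M W : Matrix ι ι R} {d : ι → R} (hW : Wᴴ * W = 1) (hMW : M * W = W * diagonal d)
    (hd : ∀ k, d k ≠ 0) : M⁻¹ = W * diagonal d⁻¹ * Wᴴ := by
  refine inv_eq_right_inv ?_
  calc M * (W * diagonal d⁻¹ * Wᴴ) = W * (diagonal d * diagonal d⁻¹) * Wᴴ := by
        simp only [← Matrix.mul_assoc, hMW]
    _ = 1 := by
        rw [diagonal_mul_diagonal, show (fun k => d k * d⁻¹ k) = fun _ => 1 from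
          funext fun k => mul_inv_cancel₀ (hd k), diagonal_one, Matrix.mul_one,
          mul_eq_one_comm.mp hW]

lemma trace_mul_conj_mul_conj [CommSemiring R] (A B W V F G : Matrix ι ι R) :
    trace (A * (W * F * V) * B * (W * G * V)) = trace (V * A * W * F * (V * B * W) * G) := by
  rw [show A * (W * F * V) * B * (W * G * V) = (A * W * F * V * B * W * G) * V by
    simp only [Matrix.mul_assoc], trace_mul_comm]
  simp only [Matrix.mul_assoc]

lemma trace_mul_diagonal_mul_mul_diagonal [DecidableEq ι] [CommSemiring R] (M N : Matrix ι ι R)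
    (f g : ι → R) :
    trace (M * diagonal f * N * diagonal g) = ∑ k, ∑ ℓ, M k ℓ * f ℓ * N ℓ k * g k := by
  refine Finset.sum_congr rfl fun k _ => ?_
  rw [diag_apply, mul_diagonal, mul_apply, Finset.sum_mul]
  exact Finset.sum_congr rfl fun ℓ _ => by rw [mul_diagonal]

lemma trace_mul_resolvent_mul_resolvent [DecidableEq ι] [Field R] [StarRing R]
    (σ A B : Matrix ι ι R) {u : ι → ι → R} {μ : ι → R} {c : R}
    (horth : ∀ k ℓ, star (u k) ⬝ᵥ u ℓ = if k = ℓ then 1 else 0)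
    (heig : ∀ k, σ *ᵥ u k = μ k • u k) (hc : ∀ k, μ k + c ≠ 0) :
    trace (A * (σ + c • 1)⁻¹ * B * (σ + c • 1)⁻¹) =
      ∑ k, ∑ ℓ, (μ k + c)⁻¹ * (μ ℓ + c)⁻¹ *
        ((star (u k) ⬝ᵥ A *ᵥ u ℓ) * (star (u ℓ) ⬝ᵥ B *ᵥ u k)) := by
  have hshift : ∀ k, (σ + c • 1) *ᵥ u k = (μ k + c) • u k := fun k => by
    rw [add_mulVec, heig, smul_mulVec, one_mulVec, add_smul]
  rw [inv_eq_mul_diagonal_inv_mul_conjTranspose (conjTranspose_mul_transpose_of_eq_one horth)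
    (mul_transpose_of_eq_mul_diagonal hshift) hc,
    trace_mul_conj_mul_conj, trace_mul_diagonal_mul_mul_diagonal]
  simp only [conjTranspose_mul_mul_transpose_of_apply, Pi.inv_apply]
  exact Finset.sum_congr rfl fun k _ => Finset.sum_congr rfl fun ℓ _ => by ring

end Matrix

theorem kuboMori_integral_representation_general {n : ℕ}
    (σ A B : Matrix (Fin n) (Fin n) ℂ)
    (lam : Fin n → ℝ) (u : Fin n → (Fin n → ℂ))
    (hlam : ∀ k, 0 < lam k)
    (horth : ∀ k ℓ, star (u k) ⬝ᵥ u ℓ = if k = ℓ then (1 : ℂ) else 0)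
    (heig : ∀ k, σ.mulVec (u k) = (lam k : ℂ) • u k) :
    (∫ s in Set.Ioi (0 : ℝ),
        Matrix.trace (A * (σ + (s : ℂ) • (1 : Matrix (Fin n) (Fin n) ℂ))⁻¹ *
          B * (σ + (s : ℂ) • (1 : Matrix (Fin n) (Fin n) ℂ))⁻¹))
      = ∑ k, ∑ ℓ, (cKM (lam k) (lam ℓ) : ℂ) *
          (star (u k) ⬝ᵥ A.mulVec (u ℓ)) * (star (u ℓ) ⬝ᵥ B.mulVec (u k)) := by
  have hkernel k ℓ := integrableOn_and_integral_complex_inv_add_mul_inv_add (hlam k) (hlam ℓ)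
  have hres : ∀ s ∈ Ioi (0 : ℝ),
      trace (A * (σ + (s : ℂ) • 1)⁻¹ * B * (σ + (s : ℂ) • 1)⁻¹) =
      ∑ k, ∑ ℓ, ((lam k : ℂ) + s)⁻¹ * ((lam ℓ : ℂ) + s)⁻¹ *
        ((star (u k) ⬝ᵥ A *ᵥ u ℓ) * (star (u ℓ) ⬝ᵥ B *ᵥ u k)) := fun s hs =>
    trace_mul_resolvent_mul_resolvent σ A B horth heig fun k => by
      exact_mod_cast (add_pos (hlam k) hs).ne'
  rw [setIntegral_congr_fun measurableSet_Ioi hres, integral_finsetSum _ fun k _ =>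
    integrable_finsetSum _ fun ℓ _ => (hkernel k ℓ).1.mul_const _]
  refine Finset.sum_congr rfl fun k _ => ?_
  rw [integral_finsetSum _ fun ℓ _ => (hkernel k ℓ).1.mul_const _]
  refine Finset.sum_congr rfl fun ℓ _ => ?_
  rw [integral_mul_const, (hkernel k ℓ).2, mul_assoc]

/-- Integral representation of the Kubo--Mori kernel: for a positive definite
Hermitian matrix σ with orthonormal eigenbasis `u` and eigenvalues `lam`, and
Hermitian matrices A, B,
∫₀^∞ Tr[A (σ + sI)⁻¹ B (σ + sI)⁻¹] ds = ∑_{k,ℓ} c(λ_k, λ_ℓ) ⟨k|A|ℓ⟩⟨ℓ|B|k⟩. -/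
theorem kuboMori_integral_representation {n : ℕ}
    (σ A B : Matrix (Fin n) (Fin n) ℂ)
    (hσ : σ.PosDef) (hA : A.IsHermitian) (hB : B.IsHermitian)
    (lam : Fin n → ℝ) (u : Fin n → (Fin n → ℂ))
    (hlam : ∀ k, 0 < lam k)
    (horth : ∀ k ℓ, star (u k) ⬝ᵥ u ℓ = if k = ℓ then (1 : ℂ) else 0)
    (heig : ∀ k, σ.mulVec (u k) = (lam k : ℂ) • u k) :
    (∫ s in Set.Ioi (0 : ℝ),
        Matrix.trace (A * (σ + (s : ℂ) • (1 : Matrix (Fin n) (Fin n) ℂ))⁻¹ *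
          B * (σ + (s : ℂ) • (1 : Matrix (Fin n) (Fin n) ℂ))⁻¹))
      = ∑ k, ∑ ℓ, (cKM (lam k) (lam ℓ) : ℂ) *
          (star (u k) ⬝ᵥ A.mulVec (u ℓ)) * (star (u ℓ) ⬝ᵥ B.mulVec (u k)) :=
  kuboMori_integral_representation_general σ A B lam u hlam horth heig
end

section
/- The function p(t) := (2/π) ln|coth(πt/2)| is a probability density function on ℝ, i.e., p(t) ≥ 0 for all t ≠ 0 and ∫_ℝ p(t) dt = 1. -/
open MeasureTheory

open Real Set

/-!
For `x > 0` put `u = exp (-2x) ∈ (0, 1)`. Then `coth x = (1 + u) / (1 - u)`, so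
`log coth x = 2 artanh u = ∑ₖ 2 exp (-2(2k+1)x) / (2k+1)`. The terms are nonnegative, so by
monotone convergence the series integrates termwise over `(0, ∞)`:
`∫₀^∞ log coth x dx = ∑ₖ 1 / (2k+1)² = π² / 8`. As `log |coth x|` is even, its integral over `ℝ`
is `π² / 4`, and the substitution `x = πt/2` turns this into `∫ p = 1`.
-/

theorem hasSum_one_div_odd_sq :
    HasSum (fun k : ℕ => 1 / (2 * (k : ℝ) + 1) ^ 2) (π ^ 2 / 8) := by
  have hodd : Summable fun k : ℕ => 1 / ((2 * k + 1 : ℕ) : ℝ) ^ 2 :=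
    hasSum_zeta_two.summable.comp_injective fun a b h => by omega
  have heven : HasSum (fun k : ℕ => 1 / ((2 * k : ℕ) : ℝ) ^ 2) (π ^ 2 / 24) := by
    have hquarter : (fun k : ℕ => 1 / ((2 * k : ℕ) : ℝ) ^ 2) =
        fun k : ℕ => 1 / 4 * (1 / (k : ℝ) ^ 2) := by
      funext k
      push_cast
      ring
    rw [hquarter, show π ^ 2 / 24 = 1 / 4 * (π ^ 2 / 6) by ring]
    exact hasSum_zeta_two.mul_left (1 / 4)
  have htotal := (HasSum.even_add_odd (f := fun n : ℕ => 1 / (n : ℝ) ^ 2)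
    heven hodd.hasSum).unique hasSum_zeta_two
  have hcast : (fun k : ℕ => 1 / (2 * (k : ℝ) + 1) ^ 2) =
      fun k : ℕ => 1 / ((2 * k + 1 : ℕ) : ℝ) ^ 2 := by
    funext k
    push_cast
    ring
  rw [hcast, show π ^ 2 / 8 = ∑' k : ℕ, 1 / ((2 * k + 1 : ℕ) : ℝ) ^ 2 by linarith]
  exact hodd.hasSum

noncomputable def logAbsCoth (x : ℝ) : ℝ := log |cosh x / sinh x|

-- At `x = 0` both sides are the junk value `0`.
theorem cosh_div_sinh_eq (x : ℝ) :
    cosh x / sinh x = (1 + exp (-2 * x)) / (1 - exp (-2 * x)) := by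
  have h1 : 1 + exp (-2 * x) = exp (-x) * (2 * cosh x) := by
    rw [cosh_eq, mul_div_cancel₀ _ two_ne_zero, mul_add, ← exp_add, ← exp_add, neg_add_cancel,
      exp_zero]
    ring_nf
  have h2 : 1 - exp (-2 * x) = exp (-x) * (2 * sinh x) := by
    rw [sinh_eq, mul_div_cancel₀ _ two_ne_zero, mul_sub, ← exp_add, ← exp_add, neg_add_cancel,
      exp_zero]
    ring_nf
  rw [h1, h2, mul_div_mul_left _ _ (exp_pos _).ne', mul_div_mul_left _ _ two_ne_zero]

theorem logAbsCoth_neg (x : ℝ) : logAbsCoth (-x) = logAbsCoth x := by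
  simp only [logAbsCoth, cosh_neg, sinh_neg, div_neg, abs_neg]

theorem logAbsCoth_abs (x : ℝ) : logAbsCoth |x| = logAbsCoth x := by
  rcases abs_choice x with h | h <;> simp only [h, logAbsCoth_neg]

theorem logAbsCoth_nonneg (x : ℝ) : 0 ≤ logAbsCoth x := by
  rcases eq_or_ne (sinh x) 0 with h | h
  · simp [logAbsCoth, h]
  refine log_nonneg ?_
  rw [abs_div, one_le_div (abs_pos.2 h), abs_sinh, abs_of_pos (cosh_pos x), ← cosh_abs]
  exact (sinh_lt_cosh _).le

theorem measurable_logAbsCoth : Measurable logAbsCoth := by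
  unfold logAbsCoth
  fun_prop

noncomputable def logCothTerm (k : ℕ) (x : ℝ) : ℝ :=
  2 / (2 * k + 1) * exp (-(2 * (2 * k + 1)) * x)

theorem logCothTerm_nonneg (k : ℕ) (x : ℝ) : 0 ≤ logCothTerm k x := by
  unfold logCothTerm
  positivity

theorem hasSum_logCothTerm {x : ℝ} (hx : 0 < x) :
    HasSum (fun k => logCothTerm k x) (logAbsCoth x) := by
  have hu : exp (-2 * x) < 1 := exp_lt_one_iff.2 (by linarith)
  have h := hasSum_log_sub_log_of_abs_lt_one (x := exp (-2 * x))
    (by rwa [abs_of_pos (exp_pos _)])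
  rw [← log_div (by positivity) (sub_pos.2 hu).ne', ← cosh_div_sinh_eq,
    ← abs_of_pos (div_pos (cosh_pos x) (sinh_pos_iff.2 hx))] at h
  refine h.congr_fun fun k => ?_
  rw [logCothTerm, ← exp_nat_mul]
  push_cast
  ring_nf

theorem integral_logCothTerm (k : ℕ) :
    ∫ x in Ioi 0, logCothTerm k x = 1 / (2 * k + 1) ^ 2 := by
  have hk : (0 : ℝ) < 2 * k + 1 := by positivity
  simp only [logCothTerm]
  rw [integral_const_mul, integral_exp_mul_Ioi (by linarith) 0, mul_zero, exp_zero]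
  field_simp

theorem integrableOn_logCothTerm (k : ℕ) : IntegrableOn (logCothTerm k) (Ioi 0) :=
  (integrableOn_exp_mul_Ioi (neg_lt_zero.2 (by positivity)) 0).const_mul _

theorem lintegral_ofReal_logAbsCoth_Ioi :
    ∫⁻ x in Ioi 0, ENNReal.ofReal (logAbsCoth x) = ENNReal.ofReal (π ^ 2 / 8) := by
  calc ∫⁻ x in Ioi 0, ENNReal.ofReal (logAbsCoth x)
      = ∫⁻ x in Ioi 0, ∑' k, ENNReal.ofReal (logCothTerm k x) := by
        refine setLIntegral_congr_fun measurableSet_Ioi fun x hx => ?_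
        rw [← (hasSum_logCothTerm hx).tsum_eq, ENNReal.ofReal_tsum_of_nonneg
          (fun k => logCothTerm_nonneg k x) (hasSum_logCothTerm hx).summable]
    _ = ∑' k, ∫⁻ x in Ioi 0, ENNReal.ofReal (logCothTerm k x) :=
        lintegral_tsum fun k => by unfold logCothTerm; fun_prop
    _ = ∑' k : ℕ, ENNReal.ofReal (1 / (2 * k + 1) ^ 2) := by
        refine tsum_congr fun k => ?_
        rw [← ofReal_integral_eq_lintegral_ofReal (integrableOn_logCothTerm k)
          (ae_of_all _ (logCothTerm_nonneg k)), integral_logCothTerm]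
    _ = ENNReal.ofReal (π ^ 2 / 8) := by
        rw [← ENNReal.ofReal_tsum_of_nonneg (fun k => by positivity)
          hasSum_one_div_odd_sq.summable, hasSum_one_div_odd_sq.tsum_eq]

theorem integrableOn_logAbsCoth_Ioi : IntegrableOn logAbsCoth (Ioi 0) := by
  refine ⟨measurable_logAbsCoth.aestronglyMeasurable, ?_⟩
  rw [hasFiniteIntegral_iff_ofReal (ae_of_all _ logAbsCoth_nonneg),
    lintegral_ofReal_logAbsCoth_Ioi]
  exact ENNReal.ofReal_lt_top

theorem integral_logAbsCoth_Ioi : ∫ x in Ioi 0, logAbsCoth x = π ^ 2 / 8 := by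
  rw [integral_eq_lintegral_of_nonneg_ae (ae_of_all _ logAbsCoth_nonneg)
    measurable_logAbsCoth.aestronglyMeasurable, lintegral_ofReal_logAbsCoth_Ioi,
    ENNReal.toReal_ofReal (by positivity)]

theorem integrable_of_even_of_integrableOn_Ioi {E : Type*} [NormedAddCommGroup E] {f : ℝ → E}
    (heven : ∀ x, f (-x) = f x) (hf : IntegrableOn f (Ioi 0)) : Integrable f := by
  have hIic : IntegrableOn f (Iic 0) := by
    have hneg : MeasurableEmbedding fun x : ℝ => -x := (Homeomorph.neg ℝ).measurableEmbedding
    rw [← Measure.map_neg_eq_self (volume : Measure ℝ), hneg.integrableOn_map_iff]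
    simp_rw [Function.comp_def, heven, neg_preimage, neg_Iic, neg_zero]
    exact (integrableOn_Ici_iff_integrableOn_Ioi).mpr hf
  simpa only [Iic_union_Ioi, integrableOn_univ] using hIic.union hf

theorem integrable_logAbsCoth : Integrable logAbsCoth :=
  integrable_of_even_of_integrableOn_Ioi logAbsCoth_neg integrableOn_logAbsCoth_Ioi

theorem integral_logAbsCoth : ∫ x, logAbsCoth x = π ^ 2 / 4 := by
  calc ∫ x, logAbsCoth x = ∫ x, logAbsCoth |x| := by simp only [logAbsCoth_abs]
    _ = π ^ 2 / 4 := by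
      rw [integral_comp_abs (f := logAbsCoth), integral_logAbsCoth_Ioi]
      ring

/-- The "high-peak tent" function p(t) = (2/π) ln|coth(πt/2)| (with
coth x = cosh x / sinh x) is a probability density on ℝ: it is nonnegative away
from 0, integrable, and integrates to 1. -/
theorem highPeakTent_isProbabilityDensity :
    (∀ t : ℝ, t ≠ 0 →
        0 ≤ (2 / Real.pi) *
            Real.log |Real.cosh (Real.pi * t / 2) / Real.sinh (Real.pi * t / 2)|) ∧
      Integrable (fun t : ℝ => (2 / Real.pi) *
          Real.log |Real.cosh (Real.pi * t / 2) / Real.sinh (Real.pi * t / 2)|) ∧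
      (∫ t : ℝ, (2 / Real.pi) *
          Real.log |Real.cosh (Real.pi * t / 2) / Real.sinh (Real.pi * t / 2)|) = 1 := by
  simp only [show ∀ t, π * t / 2 = π / 2 * t from fun t => by ring]
  show (∀ t : ℝ, t ≠ 0 → 0 ≤ 2 / π * logAbsCoth (π / 2 * t)) ∧
    Integrable (fun t => 2 / π * logAbsCoth (π / 2 * t)) ∧
    ∫ t, 2 / π * logAbsCoth (π / 2 * t) = 1
  refine ⟨fun t _ => mul_nonneg (by positivity) (logAbsCoth_nonneg _),
    (integrable_logAbsCoth.comp_mul_left' (by positivity)).const_mul _, ?_⟩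
  rw [integral_const_mul, Measure.integral_comp_mul_left, integral_logAbsCoth, smul_eq_mul,
    abs_of_pos (by positivity)]
  field_simp
  ring
end

section
/- Under the same hypotheses as Theorem 1 (derivative formula ∂_j ρ(θ) = −(1/2){Φ_θ(G_j), ρ(θ)} + ρ(θ)⟨G_j⟩), the Kubo–Mori information matrix elements of the thermal family satisfy I^{KM}_{ij}(θ) = (1/2)Tr[{G_i, Φ_θ(G_j)} ρ(θ)] − ⟨G_i⟩_{ρ(θ)} ⟨G_j⟩_{ρ(θ)}. -/
/-!
In the eigenbasis of `ρ`, with `λ_k = e^{-μ_k}/Z`, the Kubo–Mori kernel `cKM λ_k λ_ℓ` is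
exactly the reciprocal of `(λ_k + λ_ℓ)/2 · tanh((μ_ℓ - μ_k)/2)/((μ_ℓ - μ_k)/2)`, the factor
by which `X ↦ ½{Φ X, ρ}` acts on matrix elements. Hence the Kubo–Mori form `I(X, Y)` satisfies
`I(½{Φ X, ρ}, Y) = Tr(X Y)` and `I(ρ, Y) = Tr Y`. Substituting
`∂_i ρ = -½{Φ G_i, ρ} + ⟨G_i⟩ ρ` in the first slot and using `Tr ∂_j ρ = 0` gives the formula.
-/

open Matrix

/-- Kubo--Mori information matrix element, expressed through the eigenvalues `lam`,
orthonormal eigenvectors `u` of the state, and derivative matrices `d`. -/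
noncomputable def kuboMori {ι : Type*} [Fintype ι] {J : ℕ}
    (lam : ι → ℝ) (u : ι → ι → ℂ) (d : Fin J → Matrix ι ι ℂ) (i j : Fin J) : ℂ :=
  ∑ k, ∑ ℓ, (cKM (lam k) (lam ℓ) : ℂ) *
      (star (u k) ⬝ᵥ (d i).mulVec (u ℓ)) * (star (u ℓ) ⬝ᵥ (d j).mulVec (u k))

lemma Real.tanh_half_sub (a b : ℝ) :
    Real.tanh ((b - a) / 2) =
      (Real.exp (-a) - Real.exp (-b)) / (Real.exp (-a) + Real.exp (-b)) := by
  have ha : Real.exp (-a) = Real.exp ((b - a) / 2) * Real.exp (-(a + b) / 2) := by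
    rw [← Real.exp_add]; ring_nf
  have hb : Real.exp (-b) = Real.exp (-((b - a) / 2)) * Real.exp (-(a + b) / 2) := by
    rw [← Real.exp_add]; ring_nf
  have : Real.exp ((b - a) / 2) + Real.exp (-((b - a) / 2)) ≠ 0 := by positivity
  rw [Real.tanh_eq_sinh_div_cosh, Real.sinh_eq, Real.cosh_eq, ha, hb]
  field_simp

lemma cKM_gibbs_mul_add_mul_tanh_ratio (a b : ℝ) {Z : ℝ} (hZ : 0 < Z) :
    cKM (Real.exp (-a) / Z) (Real.exp (-b) / Z) * (Real.exp (-a) / Z + Real.exp (-b) / Z) *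
      (if a = b then 1 else Real.tanh ((b - a) / 2) / ((b - a) / 2)) = 2 := by
  by_cases hab : a = b
  · subst hab
    simp only [cKM, if_true]
    field_simp
    ring
  have hexp : Real.exp (-a) - Real.exp (-b) ≠ 0 :=
    sub_ne_zero.mpr fun h => hab (neg_injective (Real.exp_injective h))
  have hne : Real.exp (-a) / Z ≠ Real.exp (-b) / Z := by
    rw [Ne, div_left_inj' hZ.ne']
    exact sub_ne_zero.mp hexp
  have hlog : Real.log (Real.exp (-a) / Z) - Real.log (Real.exp (-b) / Z) = b - a := by
    rw [Real.log_div (Real.exp_ne_zero _) hZ.ne', Real.log_div (Real.exp_ne_zero _) hZ.ne',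
      Real.log_exp, Real.log_exp]
    ring
  have hba : b - a ≠ 0 := sub_ne_zero.mpr (Ne.symm hab)
  rw [cKM, if_neg hne, hlog, if_neg hab, Real.tanh_half_sub]
  field_simp

section MatrixElements

variable {ι : Type*} [Fintype ι] [DecidableEq ι] {u : ι → ι → ℂ}

def matrixElement (u : ι → ι → ℂ) (M : Matrix ι ι ℂ) (k ℓ : ι) : ℂ :=
  star (u k) ⬝ᵥ M *ᵥ u ℓ

omit [DecidableEq ι] in
lemma matrixElement_eq_conjTranspose_mul_mul_apply (M : Matrix ι ι ℂ) (k ℓ : ι) :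
    matrixElement u M k ℓ = ((of u)ᵀᴴ * M * (of u)ᵀ) k ℓ := by
  rw [matrixElement, dotProduct_mulVec]
  simp only [dotProduct, vecMul, mul_apply, conjTranspose_apply, transpose_apply, of_apply,
    Pi.star_apply]

omit [DecidableEq ι] in
lemma matrixElement_add (A B : Matrix ι ι ℂ) (k ℓ : ι) :
    matrixElement u (A + B) k ℓ = matrixElement u A k ℓ + matrixElement u B k ℓ := by
  simp only [matrixElement, add_mulVec, dotProduct_add]

omit [DecidableEq ι] in
lemma matrixElement_smul (c : ℂ) (M : Matrix ι ι ℂ) (k ℓ : ι) :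
    matrixElement u (c • M) k ℓ = c * matrixElement u M k ℓ := by
  simp only [matrixElement, smul_mulVec, dotProduct_smul, smul_eq_mul]

variable (hu : ∀ k ℓ, star (u k) ⬝ᵥ u ℓ = if k = ℓ then (1 : ℂ) else 0)
include hu

lemma conjTranspose_mul_self_of_orthonormal : (of u)ᵀᴴ * (of u)ᵀ = 1 := by
  ext k ℓ
  simpa [mul_apply, dotProduct, one_apply] using hu k ℓ

lemma self_mul_conjTranspose_of_orthonormal : (of u)ᵀ * (of u)ᵀᴴ = 1 :=
  mul_eq_one_comm.mp (conjTranspose_mul_self_of_orthonormal hu)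

lemma matrixElement_mul (A B : Matrix ι ι ℂ) (k ℓ : ι) :
    matrixElement u (A * B) k ℓ = ∑ m, matrixElement u A k m * matrixElement u B m ℓ := by
  have : (of u)ᵀᴴ * (A * B) * (of u)ᵀ =
      (of u)ᵀᴴ * A * (of u)ᵀ * ((of u)ᵀᴴ * B * (of u)ᵀ) := by
    simp only [Matrix.mul_assoc, ← Matrix.mul_assoc (of u)ᵀ,
      self_mul_conjTranspose_of_orthonormal hu, Matrix.one_mul]
  simp only [matrixElement_eq_conjTranspose_mul_mul_apply, this]
  exact mul_apply

lemma trace_eq_sum_matrixElement (M : Matrix ι ι ℂ) :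
    M.trace = ∑ k, matrixElement u M k k := by
  have : ((of u)ᵀᴴ * M * (of u)ᵀ).trace = M.trace := by
    rw [trace_mul_cycle, self_mul_conjTranspose_of_orthonormal hu, Matrix.one_mul]
  rw [← this]
  simp only [matrixElement_eq_conjTranspose_mul_mul_apply]
  rfl

lemma trace_mul_eq_sum_matrixElement (A B : Matrix ι ι ℂ) :
    (A * B).trace = ∑ k, ∑ ℓ, matrixElement u A k ℓ * matrixElement u B ℓ k := by
  simp only [trace_eq_sum_matrixElement hu, matrixElement_mul hu]

variable {ρ : Matrix ι ι ℂ} {ν : ι → ℂ} (hρ : ∀ k, ρ *ᵥ u k = ν k • u k)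
include hρ

lemma matrixElement_of_eigen (k ℓ : ι) :
    matrixElement u ρ k ℓ = if k = ℓ then ν k else 0 := by
  rw [matrixElement, hρ, dotProduct_smul, hu, smul_eq_mul]
  split_ifs with h <;> simp [h]

lemma matrixElement_mul_of_eigen (X : Matrix ι ι ℂ) (k ℓ : ι) :
    matrixElement u (X * ρ) k ℓ = matrixElement u X k ℓ * ν ℓ := by
  simp [matrixElement_mul hu, matrixElement_of_eigen hu hρ]

lemma matrixElement_of_eigen_mul (X : Matrix ι ι ℂ) (k ℓ : ι) :
    matrixElement u (ρ * X) k ℓ = ν k * matrixElement u X k ℓ := by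
  simp [matrixElement_mul hu, matrixElement_of_eigen hu hρ]

lemma trace_mul_of_eigen (X : Matrix ι ι ℂ) :
    (X * ρ).trace = ∑ k, matrixElement u X k k * ν k := by
  simp only [trace_eq_sum_matrixElement hu, matrixElement_mul_of_eigen hu hρ]

lemma trace_mul_of_eigen_of_diag_eq_one {Φ : Matrix ι ι ℂ → Matrix ι ι ℂ} {f : ι → ι → ℂ}
    (hΦ : ∀ X k ℓ, matrixElement u (Φ X) k ℓ = f k ℓ * matrixElement u X k ℓ)
    (hf : ∀ k, f k k = 1) (X : Matrix ι ι ℂ) :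
    (Φ X * ρ).trace = (X * ρ).trace := by
  simp only [trace_mul_of_eigen hu hρ, hΦ, hf, one_mul]

end MatrixElements

section KuboMoriForm

variable {ι : Type*} [Fintype ι] [DecidableEq ι] {u : ι → ι → ℂ} {lam : ι → ℝ}

noncomputable def kuboMoriForm (lam : ι → ℝ) (u : ι → ι → ℂ) (X Y : Matrix ι ι ℂ) : ℂ :=
  ∑ k, ∑ ℓ, (cKM (lam k) (lam ℓ) : ℂ) * matrixElement u X k ℓ * matrixElement u Y ℓ k

omit [DecidableEq ι] in
lemma kuboMori_eq_kuboMoriForm {J : ℕ} (d : Fin J → Matrix ι ι ℂ) (i j : Fin J) :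
    kuboMori lam u d i j = kuboMoriForm lam u (d i) (d j) :=
  rfl

omit [DecidableEq ι] in
lemma kuboMoriForm_add_left (X X' Y : Matrix ι ι ℂ) :
    kuboMoriForm lam u (X + X') Y = kuboMoriForm lam u X Y + kuboMoriForm lam u X' Y := by
  simp only [kuboMoriForm, matrixElement_add, mul_add, add_mul, Finset.sum_add_distrib]

omit [DecidableEq ι] in
lemma kuboMoriForm_smul_left (c : ℂ) (X Y : Matrix ι ι ℂ) :
    kuboMoriForm lam u (c • X) Y = c * kuboMoriForm lam u X Y := by
  simp only [kuboMoriForm, matrixElement_smul, Finset.mul_sum]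
  refine Finset.sum_congr rfl fun k _ => Finset.sum_congr rfl fun ℓ _ => ?_
  ring

variable (hu : ∀ k ℓ, star (u k) ⬝ᵥ u ℓ = if k = ℓ then (1 : ℂ) else 0)
  {ρ : Matrix ι ι ℂ} (hρ : ∀ k, ρ *ᵥ u k = (lam k : ℂ) • u k)
include hu hρ

lemma kuboMoriForm_state_left (hlam : ∀ k, lam k ≠ 0) (Y : Matrix ι ι ℂ) :
    kuboMoriForm lam u ρ Y = Y.trace := by
  rw [trace_eq_sum_matrixElement hu]
  refine Finset.sum_congr rfl fun k _ => ?_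
  simp only [matrixElement_of_eigen hu hρ, mul_ite, mul_zero, ite_mul, zero_mul,
    Finset.sum_ite_eq, Finset.mem_univ, if_true, cKM, one_div]
  push_cast
  rw [inv_mul_cancel₀ (by exact_mod_cast hlam k), one_mul]

lemma kuboMoriForm_anticommutator_left {Φ : Matrix ι ι ℂ → Matrix ι ι ℂ} {f : ι → ι → ℂ}
    (hΦ : ∀ X k ℓ, matrixElement u (Φ X) k ℓ = f k ℓ * matrixElement u X k ℓ)
    (hf : ∀ k ℓ, (cKM (lam k) (lam ℓ) : ℂ) * (lam k + lam ℓ) * f k ℓ = 2)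
    (X Y : Matrix ι ι ℂ) :
    kuboMoriForm lam u (Φ X * ρ + ρ * Φ X) Y = 2 * (X * Y).trace := by
  rw [trace_mul_eq_sum_matrixElement hu, Finset.mul_sum]
  refine Finset.sum_congr rfl fun k _ => ?_
  rw [Finset.mul_sum]
  refine Finset.sum_congr rfl fun ℓ _ => ?_
  have hX : matrixElement u (Φ X * ρ + ρ * Φ X) k ℓ =
      (lam k + lam ℓ) * f k ℓ * matrixElement u X k ℓ := by
    rw [matrixElement_add, matrixElement_mul_of_eigen hu hρ,
      matrixElement_of_eigen_mul hu hρ, hΦ]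
    ring
  rw [hX]
  linear_combination (matrixElement u X k ℓ * matrixElement u Y ℓ k) * hf k ℓ

end KuboMoriForm

theorem kuboMori_thermal_general {n J : ℕ}
    (G : Fin J → Matrix (Fin n) (Fin n) ℂ)
    (μ : Fin n → ℝ) (u : Fin n → (Fin n → ℂ))
    (horth : ∀ k ℓ, star (u k) ⬝ᵥ u ℓ = if k = ℓ then (1 : ℂ) else 0)
    (Z : ℝ) (hZ : Z = ∑ k, Real.exp (-μ k))
    (lam : Fin n → ℝ) (hlam : ∀ k, lam k = Real.exp (-μ k) / Z)
    (ρ : Matrix (Fin n) (Fin n) ℂ)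
    (heigρ : ∀ k, ρ.mulVec (u k) = (lam k : ℂ) • u k)
    (Φ : Matrix (Fin n) (Fin n) ℂ → Matrix (Fin n) (Fin n) ℂ)
    (hΦ : ∀ (X : Matrix (Fin n) (Fin n) ℂ) k ℓ,
      star (u k) ⬝ᵥ (Φ X).mulVec (u ℓ)
        = (if μ k = μ ℓ then (1 : ℂ)
            else ((Real.tanh ((μ ℓ - μ k) / 2) / ((μ ℓ - μ k) / 2) : ℝ) : ℂ)) *
          (star (u k) ⬝ᵥ X.mulVec (u ℓ)))
    (dρ : Fin J → Matrix (Fin n) (Fin n) ℂ)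
    (hdρ : ∀ j, dρ j = -(1 / 2 : ℂ) • (Φ (G j) * ρ + ρ * Φ (G j)) +
        (Matrix.trace (G j * ρ)) • ρ)
    (i j : Fin J) :
    kuboMori lam u dρ i j
      = (1 / 2 : ℂ) * Matrix.trace ((G i * Φ (G j) + Φ (G j) * G i) * ρ) -
          Matrix.trace (G i * ρ) * Matrix.trace (G j * ρ) := by
  -- for `n = 0` the state has trace `0` rather than `1`
  obtain rfl | hn := Nat.eq_zero_or_pos n
  · simp [kuboMori, trace]
  have hZpos : 0 < Z :=
    hZ ▸ Finset.sum_pos (fun k _ => Real.exp_pos _) ⟨⟨0, hn⟩, Finset.mem_univ _⟩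
  have hlam_ne : ∀ k, lam k ≠ 0 := fun k => by rw [hlam]; positivity
  have hf : ∀ k ℓ, (cKM (lam k) (lam ℓ) : ℂ) * (lam k + lam ℓ) *
      (if μ k = μ ℓ then (1 : ℂ)
        else ((Real.tanh ((μ ℓ - μ k) / 2) / ((μ ℓ - μ k) / 2) : ℝ) : ℂ)) = 2 := by
    intro k ℓ
    have := cKM_gibbs_mul_add_mul_tanh_ratio (μ k) (μ ℓ) hZpos
    rw [← hlam, ← hlam] at this
    split_ifs at this ⊢ <;> exact_mod_cast this
  have hsum : ∑ k, lam k = 1 := by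
    simp only [hlam, ← Finset.sum_div, ← hZ, div_self hZpos.ne']
  have htrρ : ρ.trace = 1 := by
    simp only [trace_eq_sum_matrixElement horth, matrixElement_of_eigen horth heigρ, if_true]
    exact_mod_cast hsum
  have htr_dρ : (dρ j).trace = 0 := by
    rw [hdρ, trace_add, trace_smul, trace_smul, trace_add, trace_mul_comm ρ,
      trace_mul_of_eigen_of_diag_eq_one horth heigρ hΦ (fun k => if_pos rfl), htrρ]
    ring
  rw [kuboMori_eq_kuboMoriForm, hdρ i, kuboMoriForm_add_left, kuboMoriForm_smul_left,
    kuboMoriForm_smul_left, kuboMoriForm_anticommutator_left horth heigρ hΦ hf,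
    kuboMoriForm_state_left horth heigρ hlam_ne, htr_dρ, hdρ j]
  simp only [Matrix.mul_add, Matrix.mul_smul, ← Matrix.mul_assoc, trace_add, trace_smul,
    add_mul, smul_eq_mul]
  rw [trace_mul_cycle (G i) ρ]
  ring

/-- Theorem 2: for the thermal family ρ(θ) = e^{−G(θ)}/Z(θ), given the derivative
formula ∂_j ρ = −(1/2){Φ(G_j), ρ} + ρ⟨G_j⟩ and the eigenbasis action of the
belief-propagation map Φ (multiplication by tanh((μ_ℓ−μ_k)/2)/((μ_ℓ−μ_k)/2) on
the (k,ℓ) matrix element), the Kubo--Mori information matrix elements satisfy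
I^{KM}_{ij} = (1/2)Tr[{G_i, Φ(G_j)} ρ] − ⟨G_i⟩_ρ ⟨G_j⟩_ρ. -/
theorem kuboMori_thermal {n J : ℕ}
    (G : Fin J → Matrix (Fin n) (Fin n) ℂ) (hG : ∀ j, (G j).IsHermitian)
    (θ : Fin J → ℝ)
    (Gθ : Matrix (Fin n) (Fin n) ℂ) (hGθ : Gθ = ∑ j, (θ j : ℂ) • G j)
    (μ : Fin n → ℝ) (u : Fin n → (Fin n → ℂ))
    (horth : ∀ k ℓ, star (u k) ⬝ᵥ u ℓ = if k = ℓ then (1 : ℂ) else 0)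
    (heigG : ∀ k, Gθ.mulVec (u k) = (μ k : ℂ) • u k)
    (Z : ℝ) (hZ : Z = ∑ k, Real.exp (-μ k))
    (lam : Fin n → ℝ) (hlam : ∀ k, lam k = Real.exp (-μ k) / Z)
    (ρ : Matrix (Fin n) (Fin n) ℂ)
    (heigρ : ∀ k, ρ.mulVec (u k) = (lam k : ℂ) • u k)
    (hρherm : ρ.IsHermitian)
    (Φ : Matrix (Fin n) (Fin n) ℂ → Matrix (Fin n) (Fin n) ℂ)
    (hΦ : ∀ (X : Matrix (Fin n) (Fin n) ℂ) k ℓ,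
      star (u k) ⬝ᵥ (Φ X).mulVec (u ℓ)
        = (if μ k = μ ℓ then (1 : ℂ)
            else ((Real.tanh ((μ ℓ - μ k) / 2) / ((μ ℓ - μ k) / 2) : ℝ) : ℂ)) *
          (star (u k) ⬝ᵥ X.mulVec (u ℓ)))
    (dρ : Fin J → Matrix (Fin n) (Fin n) ℂ)
    (hdρ : ∀ j, dρ j = -(1 / 2 : ℂ) • (Φ (G j) * ρ + ρ * Φ (G j)) +
        (Matrix.trace (G j * ρ)) • ρ)
    (i j : Fin J) :
    kuboMori lam u dρ i j
      = (1 / 2 : ℂ) * Matrix.trace ((G i * Φ (G j) + Φ (G j) * G i) * ρ) -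
          Matrix.trace (G i * ρ) * Matrix.trace (G j * ρ) :=
  kuboMori_thermal_general G μ u horth Z hZ lam hlam ρ heigρ Φ hΦ dρ hdρ i j
end

section
/- Given the derivative formula ∂_j ρ(θ) = −(1/2){Φ_θ(G_j), ρ(θ)} + ρ(θ)⟨G_j⟩_{ρ(θ)} for a positive definite density matrix ρ(θ), the symmetric logarithmic derivative L^{(j)}(θ), defined by its eigenbasis matrix elements L^{(j)}_{kℓ} = 2⟨k|∂_j ρ(θ)|ℓ⟩/(λ_k + λ_ℓ), equals L^{(j)}(θ) = −Φ_θ(G_j) + ⟨G_j⟩_{ρ(θ)} I. -/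
open Matrix
open scoped ComplexOrder

lemma key_vmv {n : ℕ} (a b c d : Fin n → ℂ) (M : Matrix (Fin n) (Fin n) ℂ) :
    Matrix.vecMulVec a b * M * Matrix.vecMulVec c d
      = (b ⬝ᵥ M.mulVec c) • Matrix.vecMulVec a d := by
  ext i j
  simp only [Matrix.mul_apply, Matrix.vecMulVec_apply, Matrix.smul_apply,
    Matrix.mulVec, dotProduct, Finset.mul_sum, Finset.sum_mul, smul_eq_mul]
  rw [Finset.sum_comm]
  apply Finset.sum_congr rfl
  intro m _
  apply Finset.sum_congr rfl
  intro p _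
  ring

/-- Theorem 3 (SLD of thermal states): given the derivative formula
∂_j ρ = −(1/2){Φ(G_j), ρ} + ρ⟨G_j⟩ for a positive definite density matrix ρ with
orthonormal eigenbasis `u` and eigenvalues `lam`, the symmetric logarithmic
derivative L, defined by ⟨k|L|ℓ⟩ = 2⟨k|∂_j ρ|ℓ⟩/(λ_k+λ_ℓ), equals
−Φ(G_j) + ⟨G_j⟩_ρ I. -/
theorem sld_thermal {n : ℕ}
    (ρ : Matrix (Fin n) (Fin n) ℂ) (hρ : ρ.PosDef) (hρ1 : ρ.trace = 1)
    (lam : Fin n → ℝ) (u : Fin n → (Fin n → ℂ))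
    (hlam : ∀ k, 0 < lam k)
    (horth : ∀ k ℓ, star (u k) ⬝ᵥ u ℓ = if k = ℓ then (1 : ℂ) else 0)
    (hcomp : ∑ k, Matrix.vecMulVec (u k) (star (u k)) = (1 : Matrix (Fin n) (Fin n) ℂ))
    (heig : ∀ k, ρ.mulVec (u k) = (lam k : ℂ) • u k)
    (Gj ΦGj : Matrix (Fin n) (Fin n) ℂ)
    (hGj : Gj.IsHermitian) (hΦGj : ΦGj.IsHermitian)
    (dρ : Matrix (Fin n) (Fin n) ℂ)
    (hdρ : dρ = -(1 / 2 : ℂ) • (ΦGj * ρ + ρ * ΦGj) + (Matrix.trace (Gj * ρ)) • ρ)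
    (L : Matrix (Fin n) (Fin n) ℂ)
    (hL : L = ∑ k, ∑ ℓ,
        (2 * (star (u k) ⬝ᵥ dρ.mulVec (u ℓ)) / (((lam k + lam ℓ : ℝ)) : ℂ)) •
          Matrix.vecMulVec (u k) (star (u ℓ))) :
    L = -ΦGj + (Matrix.trace (Gj * ρ)) • (1 : Matrix (Fin n) (Fin n) ℂ) := by
  set t := Matrix.trace (Gj * ρ) with ht
  -- left eigenvector fact
  have hleft : ∀ k (w : Fin n → ℂ), star (u k) ⬝ᵥ ρ.mulVec w = (lam k : ℂ) * (star (u k) ⬝ᵥ w) := by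
    intro k w
    rw [Matrix.dotProduct_mulVec]
    have : star (u k) ᵥ* ρ = (lam k : ℂ) • star (u k) := by
      have h1 : star (u k) ᵥ* ρ = star (ρ.mulVec (u k)) := by
        rw [Matrix.star_mulVec, hρ.isHermitian.eq]
      rw [h1, heig k, star_smul]
      simp [Complex.star_def, Complex.conj_ofReal]
    rw [this, smul_dotProduct, smul_eq_mul]
  -- matrix element of dρ
  have hΦkl : ∀ k ℓ, star (u k) ⬝ᵥ (ΦGj * ρ).mulVec (u ℓ)
      = (lam ℓ : ℂ) * (star (u k) ⬝ᵥ ΦGj.mulVec (u ℓ)) := by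
    intro k ℓ
    rw [← Matrix.mulVec_mulVec, heig ℓ, Matrix.mulVec_smul, dotProduct_smul, smul_eq_mul]
  have hρΦ : ∀ k ℓ, star (u k) ⬝ᵥ (ρ * ΦGj).mulVec (u ℓ)
      = (lam k : ℂ) * (star (u k) ⬝ᵥ ΦGj.mulVec (u ℓ)) := by
    intro k ℓ
    rw [← Matrix.mulVec_mulVec, hleft]
  have hme : ∀ k ℓ, star (u k) ⬝ᵥ dρ.mulVec (u ℓ)
      = -(1/2 : ℂ) * (((lam k : ℝ) + lam ℓ : ℝ) : ℂ) * (star (u k) ⬝ᵥ ΦGj.mulVec (u ℓ))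
        + t * (lam ℓ : ℂ) * (if k = ℓ then (1 : ℂ) else 0) := by
    intro k ℓ
    rw [hdρ]
    simp only [Matrix.add_mulVec, Matrix.smul_mulVec, dotProduct_add,
      dotProduct_smul, smul_eq_mul, Matrix.add_mulVec]
    rw [hΦkl, hρΦ, hleft, horth]
    by_cases h : k = ℓ
    · subst h; push_cast; ring
    · simp only [h, if_false]; push_cast; ring
  -- coefficient simplification
  have hcoef : ∀ k ℓ, (2 * (star (u k) ⬝ᵥ dρ.mulVec (u ℓ)) / (((lam k + lam ℓ : ℝ)) : ℂ))
      = -(star (u k) ⬝ᵥ ΦGj.mulVec (u ℓ)) + t * (if k = ℓ then (1:ℂ) else 0) := by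
    intro k ℓ
    have hne : (((lam k + lam ℓ : ℝ)) : ℂ) ≠ 0 := by
      have h0 : lam k + lam ℓ ≠ 0 := ne_of_gt (add_pos (hlam k) (hlam ℓ))
      exact Complex.ofReal_ne_zero.mpr h0
    rw [hme, div_eq_iff hne]
    by_cases h : k = ℓ
    · subst h
      push_cast
      ring
    · simp only [h, if_false]
      push_cast
      ring
  rw [hL]
  have hsum : ∀ k ℓ, (star (u k) ⬝ᵥ ΦGj.mulVec (u ℓ)) • Matrix.vecMulVec (u k) (star (u ℓ))
      = Matrix.vecMulVec (u k) (star (u k)) * ΦGj * Matrix.vecMulVec (u ℓ) (star (u ℓ)) := by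
    intro k ℓ; rw [key_vmv]
  calc (∑ k, ∑ ℓ,
        (2 * (star (u k) ⬝ᵥ dρ.mulVec (u ℓ)) / (((lam k + lam ℓ : ℝ)) : ℂ)) •
          Matrix.vecMulVec (u k) (star (u ℓ)))
      = ∑ k, ∑ ℓ, ((-(star (u k) ⬝ᵥ ΦGj.mulVec (u ℓ))) • Matrix.vecMulVec (u k) (star (u ℓ))
          + (t * (if k = ℓ then (1:ℂ) else 0)) • Matrix.vecMulVec (u k) (star (u ℓ))) := by
        apply Finset.sum_congr rfl; intro k _; apply Finset.sum_congr rfl; intro ℓ _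
        rw [hcoef, add_smul]
    _ = -ΦGj + t • (1 : Matrix (Fin n) (Fin n) ℂ) := by
        rw [Finset.sum_congr rfl (fun k _ => Finset.sum_add_distrib), Finset.sum_add_distrib]
        congr 1
        · have hneg : ∀ k ℓ, (-(star (u k) ⬝ᵥ ΦGj.mulVec (u ℓ))) • Matrix.vecMulVec (u k) (star (u ℓ))
              = -(Matrix.vecMulVec (u k) (star (u k)) * ΦGj * Matrix.vecMulVec (u ℓ) (star (u ℓ))) := by
            intro k ℓ; rw [neg_smul, hsum]
          have hΦ : (∑ k, ∑ ℓ, Matrix.vecMulVec (u k) (star (u k)) * ΦGj * Matrix.vecMulVec (u ℓ) (star (u ℓ)))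
              = ΦGj := by
            have h1 : (∑ k, ∑ ℓ, Matrix.vecMulVec (u k) (star (u k)) * ΦGj * Matrix.vecMulVec (u ℓ) (star (u ℓ)))
                = (∑ k, Matrix.vecMulVec (u k) (star (u k))) * ΦGj * (∑ ℓ, Matrix.vecMulVec (u ℓ) (star (u ℓ))) := by
              rw [Finset.sum_mul, Finset.sum_mul]
              exact Finset.sum_congr rfl fun k _ => (Finset.mul_sum _ _ _).symm
            rw [h1, hcomp]; simp
          calc (∑ k, ∑ ℓ, (-(star (u k) ⬝ᵥ ΦGj.mulVec (u ℓ))) • Matrix.vecMulVec (u k) (star (u ℓ)))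
              = -∑ k, ∑ ℓ, Matrix.vecMulVec (u k) (star (u k)) * ΦGj * Matrix.vecMulVec (u ℓ) (star (u ℓ)) := by
                simp [hneg]
            _ = -ΦGj := by rw [hΦ]
        · have hδ : ∀ k : Fin n, (∑ ℓ, (t * (if k = ℓ then (1:ℂ) else 0)) • Matrix.vecMulVec (u k) (star (u ℓ)))
              = t • Matrix.vecMulVec (u k) (star (u k)) := by
            intro k
            rw [Finset.sum_eq_single k]
            · simp
            · intro ℓ _ hne; simp [Ne.symm hne]
            · simp
          simp only [hδ]
          rw [← Finset.smul_sum, hcomp]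
end
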